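/- arXiv:2006.05828 — 7 statements merged into one kernel-verified Lean document; each statement's English description precedes it below -/
import Mathlib

section
/- For every real number z with 0 ≤ z < 1, the infinite product ∏_{j=1}^∞ (1 - z^j) is at least 1 - z - z². -/
open Finset Real

private lemma weierstrass_prod (a : ℕ → ℝ) (h0 : ∀ j, 0 ≤ a j) (h1 : ∀ j, a j ≤ 1) (n : ℕ) :
    1 - ∑ j ∈ range n, a j ≤ ∏ j ∈ range n, (1 - a j) := by
  induction n with
  | zero => simp
  | succ n ih =>
    rw [Finset.prod_range_succ, Finset.sum_range_succ]
    have hs : 0 ≤ ∑ j ∈ range n, a j := Finset.sum_nonneg fun j _ => h0 j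
    nlinarith [mul_le_mul_of_nonneg_right ih (sub_nonneg.2 (h1 n)), h0 n, h1 n]

private lemma geom_tail (z : ℝ) (hz0 : 0 ≤ z) (hz1 : z < 1) (n : ℕ) :
    ∑ j ∈ range n, z ^ (j + 2) ≤ z ^ 2 / (1 - z) := by
  have h1z : 0 < 1 - z := by linarith
  have : ∑ j ∈ range n, z ^ (j + 2) = z ^ 2 * ∑ j ∈ range n, z ^ j := by
    rw [Finset.mul_sum]; congr 1; ext j; ring
  rw [this, div_eq_mul_inv]
  have hgeom : ∑ j ∈ range n, z ^ j ≤ (1 - z)⁻¹ := by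
    have := Summable.sum_le_tsum (range n) (fun i _ => by positivity)
      (summable_geometric_of_lt_one hz0 hz1)
    rwa [tsum_geometric_of_lt_one hz0 hz1] at this
  exact mul_le_mul_of_nonneg_left hgeom (by positivity)

private lemma finite_bound (z : ℝ) (hz0 : 0 ≤ z) (hz1 : z < 1) (n : ℕ) :
    1 - z - z ^ 2 ≤ ∏ j ∈ range n, (1 - z ^ (j + 1)) := by
  have h1z : 0 < 1 - z := by linarith
  cases n with
  | zero =>
    rw [Finset.range_zero, Finset.prod_empty]
    nlinarith
  | succ n =>
    rw [Finset.prod_range_succ']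
    rw [zero_add, pow_one]
    have hpow : ∀ j : ℕ, z ^ (j + 2) ≤ 1 := fun j =>
      pow_le_one₀ hz0 hz1.le |>.trans_eq rfl
    have hW : 1 - ∑ j ∈ range n, z ^ (j + 2) ≤ ∏ j ∈ range n, (1 - z ^ (j + 1 + 1)) := by
      have := weierstrass_prod (fun j => z ^ (j + 2)) (fun j => by positivity) hpow n
      simpa using this
    have hT := geom_tail z hz0 hz1 n
    have h2 : 1 - z ^ 2 / (1 - z) ≤ ∏ j ∈ range n, (1 - z ^ (j + 1 + 1)) := by linarith
    have := mul_le_mul_of_nonneg_right h2 h1z.le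
    calc 1 - z - z ^ 2 = (1 - z ^ 2 / (1 - z)) * (1 - z) := by field_simp
    _ ≤ (∏ j ∈ range n, (1 - z ^ (j + 1 + 1))) * (1 - z) := this

private lemma multipliable_aux (z : ℝ) (hz0 : 0 ≤ z) (hz1 : z < 1) :
    Multipliable (fun j : ℕ => 1 - z ^ (j + 1)) := by
  rcases eq_or_lt_of_le hz0 with h | h
  · simp only [← h, zero_pow (Nat.succ_ne_zero _), sub_zero]
    exact multipliable_one
  have h1z : 0 < 1 - z := by linarith
  have hpos : ∀ j : ℕ, 0 < 1 - z ^ (j + 1) := fun j => by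
    have : z ^ (j + 1) < 1 := pow_lt_one₀ hz0 hz1 (Nat.succ_ne_zero j)
    linarith
  have hlog : Summable fun j : ℕ => Real.log (1 - z ^ (j + 1)) := by
    apply Summable.of_abs
    have hb : Summable fun j : ℕ => z ^ (j + 1) / (1 - z) := by
      apply Summable.div_const
      exact (summable_geometric_of_lt_one hz0 hz1).comp_injective (add_left_injective 1)
    apply hb.of_nonneg_of_le (fun j => abs_nonneg _)
    intro j
    have hj1 : z ^ (j + 1) < 1 := pow_lt_one₀ hz0 hz1 (Nat.succ_ne_zero j)
    have hj0 : 0 ≤ z ^ (j + 1) := by positivity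
    have hlogle : Real.log (1 - z ^ (j + 1)) ≤ 0 := Real.log_nonpos (by linarith) (by linarith)
    rw [abs_of_nonpos hlogle]
    have : -Real.log (1 - z ^ (j + 1)) = Real.log (1 - z ^ (j + 1))⁻¹ := (Real.log_inv _).symm
    rw [this]
    have h2 := Real.log_le_sub_one_of_pos (inv_pos.2 (hpos j))
    have hmono : 1 - z ≤ 1 - z ^ (j + 1) := by
      have : z ^ (j + 1) ≤ z := by
        calc z ^ (j + 1) ≤ z ^ 1 := pow_le_pow_of_le_one hz0 hz1.le (by omega)
        _ = z := pow_one z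
      linarith
    have h3 : (1 - z ^ (j + 1))⁻¹ - 1 ≤ z ^ (j + 1) / (1 - z) := by
      have e1 : (1 - z ^ (j + 1))⁻¹ * (1 - z ^ (j + 1)) = 1 :=
        inv_mul_cancel₀ (hpos j).ne'
      have e2 : z ^ (j + 1) / (1 - z) * (1 - z) = z ^ (j + 1) :=
        div_mul_cancel₀ _ h1z.ne'
      have hBnn : 0 ≤ z ^ (j + 1) / (1 - z) := div_nonneg hj0 h1z.le
      nlinarith [mul_le_mul_of_nonneg_left hmono hBnn, hpos j]
    linarith
  exact Real.multipliable_of_summable_log hpos hlog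

theorem euler_product_lower_bound (z : ℝ) (hz0 : 0 ≤ z) (hz1 : z < 1) :
    1 - z - z ^ 2 ≤ ∏' j : ℕ, (1 - z ^ (j + 1)) := by
  have hm := multipliable_aux z hz0 hz1
  have htend := hm.hasProd.tendsto_prod_nat
  exact ge_of_tendsto' htend (fun n => finite_bound z hz0 hz1 n)
end

section
/- Let x ≥ 1 be an integer and set k_j = (x+1)·j for j = 1, ..., m, with n = (x+1)m(m+1)/2. Then 2^{-n/2} · 3^m · ∏_{j=1}^m (1 - (4/3)·2^{-(x+1)j}) ≥ 2^{-n/2} · 3^m · (1 - 2^{-x} - 2^{-2x}). -/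
lemma euler_prod_lb (z : ℝ) (h0 : 0 ≤ z) (h1 : z ≤ 1/2) (m : ℕ) :
    1 - z - z^2 + z^(m+1) ≤ ∏ j ∈ Finset.Icc 1 m, (1 - z^j) := by
  induction m with
  | zero => simp; nlinarith
  | succ m ih =>
    rw [Finset.prod_Icc_succ_top (by omega : 1 ≤ m + 1)]
    rcases Nat.eq_zero_or_pos m with hm | hm
    · subst hm; simp
    · have ha : 0 ≤ z^(m+1) := pow_nonneg h0 _
      have hz : z^(m+1) ≤ z^2 := pow_le_pow_of_le_one h0 (by linarith) (by omega)
      have hfac : 0 ≤ 1 - z^(m+1) := by nlinarith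
      have key := mul_le_mul_of_nonneg_right ih hfac
      have hsucc : z^(m+1+1) = z^(m+1) * z := pow_succ z (m+1)
      nlinarith [mul_nonneg ha (by linarith : (0:ℝ) ≤ z^2 - z^(m+1))]

theorem amplitude_lower_bound (x m n : ℕ) (hx : 1 ≤ x)
    (hn : n = (x + 1) * m * (m + 1) / 2) :
    (2 : ℝ) ^ (-(n : ℝ) / 2) * 3 ^ m *
        ∏ j ∈ Finset.Icc 1 m, (1 - (4 / 3) * (2 : ℝ) ^ (-(((x + 1) * j : ℕ) : ℝ))) ≥
      (2 : ℝ) ^ (-(n : ℝ) / 2) * 3 ^ m *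
        (1 - (2 : ℝ) ^ (-(x : ℝ)) - (2 : ℝ) ^ (-(2 * (x : ℝ)))) := by
  set z : ℝ := (2 : ℝ) ^ (-(x : ℝ)) with hzdef
  have h0 : 0 ≤ z := le_of_lt (Real.rpow_pos_of_pos (by norm_num) _)
  have h1 : z ≤ 1/2 := by
    have : z ≤ (2:ℝ) ^ (-(1:ℝ)) := by
      apply Real.rpow_le_rpow_of_exponent_le (by norm_num)
      simp
      exact_mod_cast hx
    calc z ≤ (2:ℝ) ^ (-(1:ℝ)) := this
      _ = 1/2 := by rw [Real.rpow_neg_one]; norm_num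
  -- z^j = 2 ^ (-(x*j))
  have hzj : ∀ j : ℕ, z ^ j = (2:ℝ) ^ (-((x*j : ℕ) : ℝ)) := by
    intro j
    rw [hzdef, ← Real.rpow_natCast ((2:ℝ) ^ (-(x:ℝ))) j, ← Real.rpow_mul (by norm_num)]
    congr 1
    push_cast
    ring
  have hz2 : z ^ 2 = (2:ℝ) ^ (-(2 * (x:ℝ))) := by
    rw [hzdef, ← Real.rpow_natCast ((2:ℝ) ^ (-(x:ℝ))) 2, ← Real.rpow_mul (by norm_num)]
    congr 1
    push_cast
    ring
  have hprod : (1 : ℝ) - z - z^2 ≤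
      ∏ j ∈ Finset.Icc 1 m, (1 - (4 / 3) * (2 : ℝ) ^ (-(((x + 1) * j : ℕ) : ℝ))) := by
    have step1 : ∏ j ∈ Finset.Icc 1 m, (1 - z^j) ≤
        ∏ j ∈ Finset.Icc 1 m, (1 - (4 / 3) * (2 : ℝ) ^ (-(((x + 1) * j : ℕ) : ℝ))) := by
      apply Finset.prod_le_prod
      · intro j hj
        have hj1 : 1 ≤ j := (Finset.mem_Icc.mp hj).1
        have : z ^ j ≤ z ^ 1 := pow_le_pow_of_le_one h0 (by linarith) hj1
        simp at this
        linarith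
      · intro j hj
        have hj1 : 1 ≤ j := (Finset.mem_Icc.mp hj).1
        have hsplit : ((2:ℝ)) ^ (-(((x + 1) * j : ℕ) : ℝ)) =
            (2:ℝ) ^ (-((x*j : ℕ) : ℝ)) * (2:ℝ) ^ (-(j : ℝ)) := by
          rw [← Real.rpow_add (by norm_num)]
          congr 1
          push_cast
          ring
        have hjle : (2:ℝ) ^ (-(j : ℝ)) ≤ (2:ℝ) ^ (-(1:ℝ)) := by
          apply Real.rpow_le_rpow_of_exponent_le (by norm_num)
          simp
          exact_mod_cast hj1
        have hhalf : (2:ℝ) ^ (-(1:ℝ)) = 1/2 := by rw [Real.rpow_neg_one]; norm_num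
        have hxjpos : (0:ℝ) < (2:ℝ) ^ (-((x*j : ℕ) : ℝ)) := Real.rpow_pos_of_pos (by norm_num) _
        have : (4/3 : ℝ) * ((2:ℝ) ^ (-((x*j : ℕ) : ℝ)) * (2:ℝ) ^ (-(j : ℝ))) ≤
            (2:ℝ) ^ (-((x*j : ℕ) : ℝ)) := by
          rw [hhalf] at hjle
          nlinarith [Real.rpow_pos_of_pos (show (0:ℝ) < 2 by norm_num) (-(j:ℝ))]
        rw [hsplit, hzj]
        linarith
    have step2 := euler_prod_lb z h0 h1 m
    have : (0:ℝ) ≤ z^(m+1) := pow_nonneg h0 _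
    linarith
  have hpre : (0:ℝ) ≤ (2 : ℝ) ^ (-(n : ℝ) / 2) * 3 ^ m := by
    positivity
  have := mul_le_mul_of_nonneg_left hprod hpre
  rw [hz2] at *
  calc (2 : ℝ) ^ (-(n : ℝ) / 2) * 3 ^ m * (1 - z - (2:ℝ) ^ (-(2 * (x:ℝ)))) ≤ _ := by
        rw [← hz2]; exact this
    _ = _ := rfl
end

section
/- Let H be a pairwise independent family of hash functions from {0,1}ⁿ to {0,1}ᵏ and let S ⊆ {0,1}ⁿ satisfy 2^{k-2} ≤ |S| ≤ 2^{k-1}. Then the probability over a uniformly random h ∈ H that exactly one element x ∈ S satisfies h(x) = 0 is at least 1/8. -/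
theorem valiant_vazirani (n k : ℕ) (ι : Type) [Fintype ι] [Nonempty ι]
    (H : ι → (Fin n → ZMod 2) → (Fin k → ZMod 2))
    (hpair1 : ∀ (x : Fin n → ZMod 2) (y : Fin k → ZMod 2),
      ((Finset.univ.filter (fun i : ι => H i x = y)).card : ℝ) / (Fintype.card ι : ℝ) =
        (2 : ℝ) ^ (-(k : ℝ)))
    (hpair2 : ∀ (x₁ x₂ : Fin n → ZMod 2), x₁ ≠ x₂ → ∀ (y₁ y₂ : Fin k → ZMod 2),
      ((Finset.univ.filter (fun i : ι => H i x₁ = y₁ ∧ H i x₂ = y₂)).card : ℝ) /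
          (Fintype.card ι : ℝ) = (2 : ℝ) ^ (-(2 * k : ℝ)))
    (S : Finset (Fin n → ZMod 2))
    (hS1 : 2 ^ (k - 2) ≤ S.card) (hS2 : S.card ≤ 2 ^ (k - 1)) :
    ((Finset.univ.filter
        (fun i : ι => (S.filter (fun x => H i x = 0)).card = 1)).card : ℝ) /
      (Fintype.card ι : ℝ) ≥ 1 / 8 := by
  classical
  have hm0 : 0 < Fintype.card ι := Fintype.card_pos
  have hmR : (0:ℝ) < (Fintype.card ι : ℝ) := by exact_mod_cast hm0
  rcases Nat.eq_zero_or_pos k with hk0 | hk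
  · -- k = 0 : the hash values are trivial, |S| = 1, so exactly one element always maps to 0
    subst hk0
    have hScard : S.card = 1 := le_antisymm (by simpa using hS2) (by simpa using hS1)
    have hall : ∀ i : ι, (S.filter (fun x => H i x = 0)).card = 1 := by
      intro i
      have hfil : S.filter (fun x => H i x = 0) = S := by
        apply Finset.filter_true_of_mem
        intro x _
        funext j
        exact j.elim0
      rw [hfil, hScard]
    rw [Finset.filter_true_of_mem (fun i _ => hall i), Finset.card_univ,
      div_self (ne_of_gt hmR)]
    norm_num
  · -- k ≥ 1
    -- notation
    set m : ℝ := (Fintype.card ι : ℝ) with hmdef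
    -- first moment
    have hcard1 : ∀ x : Fin n → ZMod 2,
        ((Finset.univ.filter (fun i : ι => H i x = 0)).card : ℝ)
          = (2 : ℝ) ^ (-(k : ℝ)) * m := by
      intro x
      have h := hpair1 x 0
      rw [div_eq_iff (ne_of_gt hmR)] at h
      exact h
    have hsum1 : ∑ i : ι, ((S.filter (fun x => H i x = 0)).card : ℝ)
        = (S.card : ℝ) * ((2 : ℝ) ^ (-(k : ℝ)) * m) := by
      have : ∀ i : ι, ((S.filter (fun x => H i x = 0)).card : ℝ)
          = ∑ x ∈ S, (if H i x = 0 then (1:ℝ) else 0) := by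
        intro i
        rw [Finset.card_filter]
        push_cast
        rfl
      rw [Finset.sum_congr rfl (fun i _ => this i), Finset.sum_comm]
      have : ∀ x ∈ S, ∑ i : ι, (if H i x = 0 then (1:ℝ) else 0)
          = (2 : ℝ) ^ (-(k : ℝ)) * m := by
        intro x _
        rw [← hcard1 x, Finset.card_filter]
        push_cast
        rfl
      rw [Finset.sum_congr rfl this, Finset.sum_const, nsmul_eq_mul]
    -- second (pair) moment
    have hcard2 : ∀ q ∈ S.offDiag,
        ((Finset.univ.filter (fun i : ι => H i q.1 = 0 ∧ H i q.2 = 0)).card : ℝ)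
          = (2 : ℝ) ^ (-(2 * k : ℝ)) * m := by
      intro q hq
      have hne : q.1 ≠ q.2 := (Finset.mem_offDiag.mp hq).2.2
      have h := hpair2 q.1 q.2 hne 0 0
      rw [div_eq_iff (ne_of_gt hmR)] at h
      exact h
    have hsum2 : ∑ i : ι, ((S.offDiag.filter
          (fun q => H i q.1 = 0 ∧ H i q.2 = 0)).card : ℝ)
        = (S.offDiag.card : ℝ) * ((2 : ℝ) ^ (-(2 * k : ℝ)) * m) := by
      have h1 : ∀ i : ι, ((S.offDiag.filter (fun q => H i q.1 = 0 ∧ H i q.2 = 0)).card : ℝ)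
          = ∑ q ∈ S.offDiag, (if H i q.1 = 0 ∧ H i q.2 = 0 then (1:ℝ) else 0) := by
        intro i
        rw [Finset.card_filter]
        push_cast
        rfl
      rw [Finset.sum_congr rfl (fun i _ => h1 i), Finset.sum_comm]
      have h2 : ∀ q ∈ S.offDiag, ∑ i : ι, (if H i q.1 = 0 ∧ H i q.2 = 0 then (1:ℝ) else 0)
          = (2 : ℝ) ^ (-(2 * k : ℝ)) * m := by
        intro q hq
        rw [← hcard2 q hq, Finset.card_filter]
        push_cast
        rfl
      rw [Finset.sum_congr rfl h2, Finset.sum_const, nsmul_eq_mul]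
    -- pointwise inequality: 1[N i = 1] ≥ N i - N i (N i - 1)
    have hoff : ∀ i : ι, (S.filter (fun x => H i x = 0)).offDiag
        = S.offDiag.filter (fun q => H i q.1 = 0 ∧ H i q.2 = 0) := by
      intro i
      ext q
      simp only [Finset.mem_offDiag, Finset.mem_filter]
      tauto
    have hpt : ∀ i : ι, ((S.filter (fun x => H i x = 0)).card : ℝ)
        - ((S.offDiag.filter (fun q => H i q.1 = 0 ∧ H i q.2 = 0)).card : ℝ)
        ≤ (if (S.filter (fun x => H i x = 0)).card = 1 then (1:ℝ) else 0) := by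
      intro i
      rw [← hoff i, Finset.offDiag_card]
      rcases hN : (S.filter (fun x => H i x = 0)).card with _ | _ | a
      · norm_num
      · norm_num
      · have h1 : (a + 2) ≤ (a + 2) * (a + 2) := Nat.le_mul_of_pos_left _ (by omega)
        rw [if_neg (by omega)]
        rw [Nat.cast_sub h1]
        push_cast
        nlinarith [Nat.cast_nonneg (α := ℝ) a]
    -- sum it up
    have hmain : (S.card : ℝ) * ((2 : ℝ) ^ (-(k : ℝ)) * m)
        - (S.offDiag.card : ℝ) * ((2 : ℝ) ^ (-(2 * k : ℝ)) * m)
        ≤ ((Finset.univ.filter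
            (fun i : ι => (S.filter (fun x => H i x = 0)).card = 1)).card : ℝ) := by
      rw [← hsum1, ← hsum2, ← Finset.sum_sub_distrib, Finset.card_filter]
      push_cast
      exact Finset.sum_le_sum (fun i _ => hpt i)
    -- numeric facts
    have hk4 : 2 ^ k ≤ 4 * S.card := by
      rcases Nat.lt_or_ge k 2 with h2 | h2
      · have hk1 : k = 1 := by omega
        subst hk1
        have h1 : 1 ≤ S.card := le_trans (by norm_num) hS1
        omega
      · have : (4 : ℕ) * 2 ^ (k - 2) = 2 ^ k := by
          have : k - 2 + 2 = k := by omega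
          calc (4:ℕ) * 2 ^ (k-2) = 2 ^ (k - 2 + 2) := by ring
          _ = 2 ^ k := by rw [this]
        omega
    have hk2 : 2 * S.card ≤ 2 ^ k := by
      have : (2 : ℕ) * 2 ^ (k - 1) = 2 ^ k := by
        have : k - 1 + 1 = k := by omega
        calc (2:ℕ) * 2 ^ (k-1) = 2 ^ (k - 1 + 1) := by ring
        _ = 2 ^ k := by rw [this]
      omega
    have hS0 : 1 ≤ S.card := by
      have : (1:ℕ) ≤ 2 ^ (k-2) := Nat.one_le_two_pow
      omega
    -- rewrite powers
    have hPk : (2 : ℝ) ^ (-(k : ℝ)) = ((2:ℝ) ^ k)⁻¹ := by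
      rw [Real.rpow_neg (by norm_num), Real.rpow_natCast]
    have hP2k : (2 : ℝ) ^ (-(2 * k : ℝ)) = ((2:ℝ) ^ k)⁻¹ * ((2:ℝ) ^ k)⁻¹ := by
      rw [show -(2 * (k:ℝ)) = -(k:ℝ) + -(k:ℝ) by ring, Real.rpow_add (by norm_num), hPk]
    set P : ℝ := (2:ℝ) ^ k with hPdef
    have hP0 : (0:ℝ) < P := by positivity
    have hA1 : P ≤ 4 * (S.card : ℝ) := by
      have := hk4
      calc P = ((2 ^ k : ℕ) : ℝ) := by push_cast; rfl
      _ ≤ ((4 * S.card : ℕ) : ℝ) := by exact_mod_cast hk4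
      _ = 4 * (S.card : ℝ) := by push_cast; ring
    have hA2 : 2 * (S.card : ℝ) ≤ P := by
      calc 2 * (S.card : ℝ) = ((2 * S.card : ℕ) : ℝ) := by push_cast; ring
      _ ≤ ((2 ^ k : ℕ) : ℝ) := by exact_mod_cast hk2
      _ = P := by push_cast; rfl
    have hoffcard : (S.offDiag.card : ℝ) = (S.card : ℝ) * (S.card : ℝ) - (S.card : ℝ) := by
      rw [Finset.offDiag_card, Nat.cast_sub (Nat.le_mul_of_pos_left _ (by omega))]
      push_cast
      ring
    -- conclude
    rw [ge_iff_le, le_div_iff₀ hmR]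
    refine le_trans ?_ hmain
    rw [hPk, hP2k, hoffcard]
    have hA0 : (1:ℝ) ≤ (S.card : ℝ) := by exact_mod_cast hS0
    set A : ℝ := (S.card : ℝ) with hAdef
    have key : 1 / 8 ≤ A * P⁻¹ - (A * A - A) * (P⁻¹ * P⁻¹) := by
      have hexp : A * P⁻¹ - (A * A - A) * (P⁻¹ * P⁻¹)
          = (A * P - (A * A - A)) / (P * P) := by
        field_simp
      rw [hexp, le_div_iff₀ (by positivity)]
      nlinarith [mul_nonneg (by linarith : (0:ℝ) ≤ 4 * A - P) (by linarith : (0:ℝ) ≤ P - 2 * A)]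
    calc 1 / 8 * m ≤ (A * P⁻¹ - (A * A - A) * (P⁻¹ * P⁻¹)) * m := by
          apply mul_le_mul_of_nonneg_right key (le_of_lt hmR)
    _ = A * (P⁻¹ * m) - (A * A - A) * (P⁻¹ * P⁻¹ * m) := by ring
end

section
/- Let n > 4, let k < n - 2, and let c ≥ 2 be a natural number with c ≤ k. If A ∈ F₂^{k×n} is chosen by picking its k rows independently and uniformly at random, then P(rank A ≤ k - c) ≤ 2^{-c²}. Equivalently, P(dim ker A ≥ n - k + c) ≤ 2^{-c²}. -/
open Module Finset

-- extend a submodule to one of any larger finrank (within ambient dimension)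
lemma exists_superspace {K V : Type*} [Field K] [AddCommGroup V] [Module K V]
    [FiniteDimensional K V] (W : Submodule K V) (d : ℕ) (h1 : finrank K W ≤ d) :
    d ≤ finrank K V → ∃ W' : Submodule K V, W ≤ W' ∧ finrank K W' = d := by
  induction d, h1 using Nat.le_induction with
  | base => exact fun _ => ⟨W, le_rfl, rfl⟩
  | succ d hd ih =>
    intro h2
    obtain ⟨W', hle, hrank⟩ := ih (by omega)
    have hne : W' ≠ ⊤ := by
      intro h
      rw [h, finrank_top] at hrank
      omega
    obtain ⟨x, hx⟩ : ∃ x, x ∉ W' := by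
      by_contra h
      push_neg at h
      exact hne (Submodule.eq_top_iff'.2 h)
    refine ⟨(K ∙ x) ⊔ W', le_trans hle le_sup_right, ?_⟩
    have hx0 : x ≠ 0 := fun h => hx (h ▸ W'.zero_mem)
    have hdisj : (K ∙ x) ⊓ W' = ⊥ := by
      rw [inf_comm]
      exact disjoint_iff.mp ((Submodule.disjoint_span_singleton' hx0).mpr hx)
    have h3 := Submodule.finrank_sup_add_finrank_inf_eq (K ∙ x) W'
    rw [hdisj, finrank_bot, finrank_span_singleton hx0, hrank] at h3
    omega

lemma aux_one_sub (δ : ℕ) :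
    (1/4 : ℝ) + (1/2) ^ (δ + 1) ≤ ∏ j ∈ Finset.range δ, (1 - (1/2 : ℝ) ^ (j + 1)) := by
  induction δ with
  | zero => norm_num
  | succ m ih =>
    rw [Finset.prod_range_succ]
    rcases Nat.eq_zero_or_pos m with rfl | hm
    · norm_num
    · have hx : ((1/2 : ℝ)) ^ (m + 1) ≤ 1/4 := by
        calc ((1/2 : ℝ)) ^ (m + 1) ≤ (1/2) ^ 2 :=
              pow_le_pow_of_le_one (by norm_num) (by norm_num) (by omega)
          _ = 1/4 := by norm_num
      have hx0 : (0 : ℝ) < (1/2 : ℝ) ^ (m + 1) := by positivity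
      have h1 : (0 : ℝ) ≤ 1 - (1/2 : ℝ) ^ (m + 1) := by nlinarith
      have h2 := mul_le_mul_of_nonneg_right ih h1
      rw [pow_succ ((1/2 : ℝ)) (m + 1)]
      nlinarith

lemma key_prod (δ : ℕ) :
    (2 : ℝ) ^ (δ * δ) ≤ 4 * ∏ i ∈ Finset.range δ, ((2 : ℝ) ^ δ - 2 ^ i) := by
  have h1 : ∀ i ∈ Finset.range δ, (2 : ℝ) ^ δ - 2 ^ i = 2 ^ δ * (1 - (1/2) ^ (δ - i)) := by
    intro i hi
    rw [Finset.mem_range] at hi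
    have h2 : (2 : ℝ) ^ δ = 2 ^ i * 2 ^ (δ - i) := by
      rw [← pow_add]
      congr 1
      omega
    have h3 : ((1 : ℝ)/2) ^ (δ - i) = (2 ^ (δ - i) : ℝ)⁻¹ := by
      rw [div_pow, one_pow, one_div]
    rw [mul_sub, mul_one, h3, h2]
    have h4 : (2 : ℝ) ^ (δ - i) ≠ 0 := by positivity
    field_simp
  rw [Finset.prod_congr rfl h1, Finset.prod_mul_distrib, Finset.prod_const, Finset.card_range,
    ← pow_mul]
  have h2 : ∏ i ∈ Finset.range δ, (1 - (1/2 : ℝ) ^ (δ - i)) =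
      ∏ j ∈ Finset.range δ, (1 - (1/2 : ℝ) ^ (j + 1)) := by
    rw [← Finset.prod_range_reflect (fun j => 1 - (1/2 : ℝ) ^ (j + 1)) δ]
    refine Finset.prod_congr rfl fun i hi => ?_
    rw [Finset.mem_range] at hi
    rw [show δ - 1 - i + 1 = δ - i by omega]
  have h3 := aux_one_sub δ
  have h4 : (0:ℝ) < (1/2:ℝ) ^ (δ + 1) := by positivity
  have h5 : (0:ℝ) ≤ (2:ℝ) ^ (δ * δ) := by positivity
  rw [h2]
  nlinarith

lemma key_prod_nat (δ : ℕ) :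
    2 ^ (δ * δ) ≤ 4 * ∏ i ∈ Finset.range δ, (2 ^ δ - 2 ^ i) := by
  have hcast : ((∏ i ∈ Finset.range δ, (2 ^ δ - 2 ^ i) : ℕ) : ℝ) =
      ∏ i ∈ Finset.range δ, ((2 : ℝ) ^ δ - 2 ^ i) := by
    rw [Nat.cast_prod]
    refine Finset.prod_congr rfl fun i hi => ?_
    rw [Finset.mem_range] at hi
    have : (2:ℕ) ^ i ≤ 2 ^ δ := Nat.pow_le_pow_right (by norm_num) (by omega)
    push_cast [this]
    ring
  have h := key_prod δ
  rw [← hcast] at h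
  exact_mod_cast h

theorem random_matrix_low_rank_bound (n k c : ℕ) (hn : 4 < n) (hk : k < n - 2)
    (hc2 : 2 ≤ c) (hck : c ≤ k) :
    ((Finset.univ.filter
        (fun A : Matrix (Fin k) (Fin n) (ZMod 2) => A.rank ≤ k - c)).card : ℝ) /
      (Fintype.card (Matrix (Fin k) (Fin n) (ZMod 2)) : ℝ) ≤
      (2 : ℝ) ^ (-((c : ℝ) ^ 2)) := by
  classical
  obtain ⟨m, hm3, rfl⟩ : ∃ m, 3 ≤ m ∧ n = k + m := ⟨n - k, by omega, by omega⟩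
  obtain ⟨δ, rfl⟩ : ∃ δ, k = δ + c := ⟨k - c, by omega⟩
  simp only [Nat.add_sub_cancel]
  set n := δ + c + m with hn_def
  set k := δ + c with hk_def
  have hδn : δ ≤ n := by omega
  set P : Matrix (Fin k) (Fin n) (ZMod 2) → Prop := fun A => A.rank ≤ δ with hP
  -- superspace choice
  have hsup : ∀ A : Matrix (Fin k) (Fin n) (ZMod 2), P A →
      ∃ W : Submodule (ZMod 2) (Fin n → ZMod 2),
        (∀ i, A i ∈ W) ∧ finrank (ZMod 2) W = δ := by
    intro A hA
    obtain ⟨W, hle, hW⟩ := exists_superspace (Submodule.span (ZMod 2) (Set.range A)) δ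
      (by have h := (Matrix.rank_eq_finrank_span_row A).symm.le.trans hA; exact h)
      (by rw [Module.finrank_fintype_fun_eq_card, Fintype.card_fin]; exact hδn)
    exact ⟨W, fun i => hle (Submodule.subset_span ⟨i, rfl⟩), hW⟩
  set ST := {W : Submodule (ZMod 2) (Fin n → ZMod 2) // finrank (ZMod 2) W = δ} with hST
  let bas : ∀ W : ST, Basis (Fin δ) (ZMod 2) W.1 := fun W => Module.finBasisOfFinrankEq _ _ W.2
  let WA : {A // P A} → ST := fun A => ⟨(hsup A.1 A.2).choose, (hsup A.1 A.2).choose_spec.2⟩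
  have hWA : ∀ A : {A // P A}, ∀ i, A.1 i ∈ (WA A).1 := fun A => (hsup A.1 A.2).choose_spec.1
  -- the injection
  let Ψ : {A // P A} × {s : Fin δ → (Fin δ → ZMod 2) // LinearIndependent (ZMod 2) s} →
      (Fin δ → (Fin n → ZMod 2)) × (Fin k → (Fin δ → ZMod 2)) :=
    fun p => (fun j => ((bas (WA p.1)).equivFun.symm (p.2.1 j) : Fin n → ZMod 2),
      fun i => (bas (WA p.1)).equivFun ⟨p.1.1 i, hWA p.1 i⟩)
  have hli : ∀ (W : ST) (s : Fin δ → (Fin δ → ZMod 2)), LinearIndependent (ZMod 2) s →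
      LinearIndependent (ZMod 2)
        (fun j => ((bas W).equivFun.symm (s j) : Fin n → ZMod 2)) := by
    intro W s hs
    have := hs.map' ((W.1.subtype).comp (bas W).equivFun.symm.toLinearMap)
      (LinearMap.ker_eq_bot.2 ((W.1.injective_subtype).comp (bas W).equivFun.symm.injective))
    exact this
  have hspan : ∀ (W : ST) (s : Fin δ → (Fin δ → ZMod 2)), LinearIndependent (ZMod 2) s →
      Submodule.span (ZMod 2)
        (Set.range (fun j => ((bas W).equivFun.symm (s j) : Fin n → ZMod 2))) = W.1 := by
    intro W s hs
    apply Submodule.eq_of_le_of_finrank_le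
    · rw [Submodule.span_le]
      rintro _ ⟨j, rfl⟩
      exact ((bas W).equivFun.symm (s j)).2
    · rw [finrank_span_eq_card (hli W s hs), Fintype.card_fin, W.2]
  have hinj : Function.Injective Ψ := by
    rintro ⟨A, s⟩ ⟨A', s'⟩ h
    have h1 := congrArg Prod.fst h
    have h2 := congrArg Prod.snd h
    simp only [Ψ] at h1 h2
    have hW : WA A = WA A' := by
      apply Subtype.ext
      rw [← hspan (WA A) s.1 s.2, ← hspan (WA A') s'.1 s'.2, h1]
    have hAA' : A = A' := by
      apply Subtype.ext
      funext i
      have e1 : A.1 i = ((bas (WA A)).equivFun.symm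
          ((bas (WA A)).equivFun ⟨A.1 i, hWA A i⟩) : Fin n → ZMod 2) := by
        rw [LinearEquiv.symm_apply_apply]
      have e2 : A'.1 i = ((bas (WA A')).equivFun.symm
          ((bas (WA A')).equivFun ⟨A'.1 i, hWA A' i⟩) : Fin n → ZMod 2) := by
        rw [LinearEquiv.symm_apply_apply]
      rw [e1, e2, ← congrFun h2 i, ← hW]
    cases hAA'
    have hss' : s = s' := by
      apply Subtype.ext
      funext j
      exact (bas (WA A)).equivFun.symm.injective (Subtype.val_injective (congrFun h1 j))
    exact Prod.ext rfl hss'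
  have hcard := Fintype.card_le_of_injective Ψ hinj
  rw [Fintype.card_prod, Fintype.card_prod] at hcard
  -- identify cardinalities
  have hNA : Fintype.card {A // P A} = (Finset.univ.filter P).card := Fintype.card_subtype P
  have hV0 : finrank (ZMod 2) (Fin δ → ZMod 2) = δ := by
    rw [Module.finrank_fintype_fun_eq_card, Fintype.card_fin]
  have hL : Fintype.card {s : Fin δ → (Fin δ → ZMod 2) // LinearIndependent (ZMod 2) s} =
      ∏ i ∈ Finset.range δ, (2 ^ δ - 2 ^ i) := by
    rw [← Nat.card_eq_fintype_card, card_linearIndependent (le_of_eq hV0.symm)]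
    rw [← Fin.prod_univ_eq_prod_range (fun i => 2 ^ δ - 2 ^ i) δ]
    refine Finset.prod_congr rfl fun i _ => ?_
    rw [ZMod.card, hV0]
  have hC1 : Fintype.card (Fin δ → (Fin n → ZMod 2)) = 2 ^ (n * δ) := by
    simp [Fintype.card_fun, ZMod.card, ← pow_mul]
  have hC2 : Fintype.card (Fin k → (Fin δ → ZMod 2)) = 2 ^ (δ * k) := by
    simp [Fintype.card_fun, ZMod.card, ← pow_mul]
  rw [hNA, hL, hC1, hC2] at hcard
  set N := (Finset.univ.filter P).card with hNdef
  -- N * 2^(c^2) ≤ 2^(k*n)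
  have hmain : N * 2 ^ (c ^ 2) ≤ 2 ^ (k * n) := by
    have e2 : N * 2 ^ (δ * δ) ≤ 4 * (2 ^ (n * δ) * 2 ^ (δ * k)) := by
      calc N * 2 ^ (δ * δ) ≤
          N * (4 * ∏ i ∈ Finset.range δ, (2 ^ δ - 2 ^ i)) :=
            Nat.mul_le_mul_left _ (key_prod_nat δ)
        _ = 4 * (N * ∏ i ∈ Finset.range δ, (2 ^ δ - 2 ^ i)) := by ring
        _ ≤ 4 * (2 ^ (n * δ) * 2 ^ (δ * k)) := Nat.mul_le_mul_left _ hcard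
    have step1 : N * 2 ^ (c ^ 2) * 2 ^ (δ * δ) ≤ 2 ^ (k * n) * 2 ^ (δ * δ) := by
      calc N * 2 ^ (c ^ 2) * 2 ^ (δ * δ)
          = (N * 2 ^ (δ * δ)) * 2 ^ (c ^ 2) := by ring
        _ ≤ (4 * (2 ^ (n * δ) * 2 ^ (δ * k))) * 2 ^ (c ^ 2) :=
            Nat.mul_le_mul_right _ e2
        _ = 2 ^ (2 + (n * δ + δ * k) + c ^ 2) := by
            rw [show (4:ℕ) = 2 ^ 2 from rfl, ← pow_add, ← pow_add, ← pow_add]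
        _ ≤ 2 ^ (k * n + δ * δ) := by
            apply Nat.pow_le_pow_right (by norm_num)
            simp only [hn_def, hk_def]
            nlinarith [Nat.mul_le_mul hc2 hm3]
        _ = 2 ^ (k * n) * 2 ^ (δ * δ) := by rw [pow_add]
    exact Nat.le_of_mul_le_mul_right step1 (by positivity)
  -- finish in ℝ
  have hcardM : (Fintype.card (Matrix (Fin k) (Fin n) (ZMod 2)) : ℝ) = 2 ^ (k * n) := by
    have h : Fintype.card (Matrix (Fin k) (Fin n) (ZMod 2)) = 2 ^ (k * n) := by
      rw [Fintype.card_congr (Matrix.of (m := Fin k) (n := Fin n) (α := ZMod 2)).symm]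
      simp [Fintype.card_fun, ZMod.card, ← pow_mul, Nat.mul_comm n k]
    rw [h]
    push_cast
    ring
  rw [hcardM]
  have hrpow : (2 : ℝ) ^ (-((c : ℝ) ^ 2)) = ((2 : ℝ) ^ (c ^ 2 : ℕ))⁻¹ := by
    rw [show -((c : ℝ) ^ 2) = -((c ^ 2 : ℕ) : ℝ) by push_cast; ring,
      Real.rpow_neg (by norm_num), Real.rpow_natCast]
  rw [hrpow]
  rw [div_le_iff₀ (by positivity), inv_mul_eq_div, le_div_iff₀ (by positivity)]
  calc (N : ℝ) * 2 ^ (c ^ 2) = ((N * 2 ^ (c ^ 2) : ℕ) : ℝ) := by push_cast; ring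
    _ ≤ ((2 ^ (k * n) : ℕ) : ℝ) := by exact_mod_cast hmain
    _ = 2 ^ (k * n) := by push_cast; ring
end

section
/- Let A be an affine map from F₂ⁿ to F₂ᵏ of the form h(x) = Ax + b with nonempty kernel h^{-1}(0), and let d = dim ker A. Then there exists an injective affine map g : F₂^d → F₂ⁿ, g(x) = Cx + p, whose image equals h^{-1}(0). Moreover C can be chosen so that each column of C has at most n - d + 1 nonzero entries. -/
theorem affine_kernel_parametrization (n k : ℕ)
    (A : Matrix (Fin k) (Fin n) (ZMod 2)) (b : Fin k → ZMod 2)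
    (hne : ∃ x, A.mulVec x + b = 0) :
    ∃ (C : Matrix (Fin n)
        (Fin (Module.finrank (ZMod 2) (LinearMap.ker A.mulVecLin))) (ZMod 2))
      (p : Fin n → ZMod 2),
      Function.Injective (fun x => C.mulVec x + p) ∧
      Set.range (fun x => C.mulVec x + p) = {x | A.mulVec x + b = 0} ∧
      ∀ j, (Finset.univ.filter (fun i => C i j ≠ 0)).card ≤
        n - Module.finrank (ZMod 2) (LinearMap.ker A.mulVecLin) + 1 := by
  classical
  obtain ⟨p, hp⟩ := hne
  set V : Submodule (ZMod 2) (Fin n → ZMod 2) := LinearMap.ker A.mulVecLin with hVdef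
  set d := Module.finrank (ZMod 2) ↥V with hd
  let bV : Module.Basis (Fin d) (ZMod 2) V := Module.finBasis _ _
  let e : Fin n → (Fin n → ZMod 2) := fun i => Pi.single i 1
  have he_inj : Function.Injective e := fun i i' h => by
    by_contra hne'
    have := congrFun h i
    simp [e, Pi.single_apply, hne'] at this
  set s : Set (Fin n → ZMod 2) := Set.range (fun j => (bV j : Fin n → ZMod 2)) with hs
  have hsli : LinearIndepOn (ZMod 2) id s := by
    have : LinearIndependent (ZMod 2) (fun j => (bV j : Fin n → ZMod 2)) :=
      bV.linearIndependent.map' V.subtype (Submodule.ker_subtype V)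
    exact this.linearIndepOn_id
  have hspan_s : Submodule.span (ZMod 2) s = V := by
    have : s = V.subtype '' (Set.range bV) := by
      rw [← Set.range_comp]; rfl
    rw [this, Submodule.span_image, bV.span_eq, Submodule.map_subtype_top]
  set t : Set (Fin n → ZMod 2) := s ∪ Set.range e with ht
  have hst : s ⊆ t := Set.subset_union_left
  set B := hsli.extend hst with hB
  have hsB : s ⊆ B := hsli.subset_extend hst
  have hBt : B ⊆ t := hsli.extend_subset hst
  have hBli : LinearIndependent (ZMod 2) (Subtype.val : B → (Fin n → ZMod 2)) :=
    hsli.linearIndepOn_extend hst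
  have hBspan : Submodule.span (ZMod 2) B = ⊤ := by
    have h1 : Set.range e ⊆ ↑(Submodule.span (ZMod 2) B) :=
      (Set.subset_union_right).trans (hsli.subset_span_extend hst)
    have h2 : Submodule.span (ZMod 2) (Set.range e) = ⊤ := by
      have hbe : ⇑(Pi.basisFun (ZMod 2) (Fin n)) = e := by
        funext i; simp [e, Pi.basisFun_apply]
      have := (Pi.basisFun (ZMod 2) (Fin n)).span_eq
      rwa [hbe] at this
    rw [eq_top_iff, ← h2]
    exact Submodule.span_le.mpr h1
  set W := Submodule.span (ZMod 2) (B \ s) with hW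
  have hdisj : Disjoint V W := by
    have h := hBli.disjoint_span_image (s := Subtype.val ⁻¹' s)
      (t := Subtype.val ⁻¹' (B \ s)) ?_
    · have hi1 : Subtype.val '' (Subtype.val ⁻¹' s : Set B) = s := by
        rw [Subtype.image_preimage_coe]; exact Set.inter_eq_right.mpr hsB
      have hi2 : Subtype.val '' (Subtype.val ⁻¹' (B \ s) : Set B) = B \ s := by
        rw [Subtype.image_preimage_coe]; exact Set.inter_eq_right.mpr Set.diff_subset
      rw [hi1, hi2] at h
      rwa [hspan_s] at h
    · intro u hu1 hu2 x hx
      have h1 := hu1 hx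
      have h2 := hu2 hx
      simp only [Set.mem_preimage] at h1 h2
      exact absurd h1 h2.2
  have hcompl : IsCompl V W := by
    refine ⟨hdisj, codisjoint_iff.mpr ?_⟩
    rw [← hspan_s, hW, ← Submodule.span_union, Set.union_diff_cancel hsB, hBspan]
  have hfinrank_amb : Module.finrank (ZMod 2) (Fin n → ZMod 2) = n := by simp
  have hdn : d ≤ n := hfinrank_amb ▸ Submodule.finrank_le V
  have hsumrank : d + Module.finrank (ZMod 2) ↥W = n := by
    rw [hd, Submodule.finrank_add_eq_of_isCompl hcompl, hfinrank_amb]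
  set T : Finset (Fin n) := Finset.univ.filter (fun i => e i ∈ B \ s) with hT
  have hBs_sub : B \ s ⊆ Set.range e := by
    intro x hx
    rcases hBt hx.1 with h | h
    · exact absurd h hx.2
    · exact h
  have himT : e '' ↑T = B \ s := by
    apply Set.Subset.antisymm
    · rintro _ ⟨i, hi, rfl⟩
      simp only [hT, Finset.coe_filter, Set.mem_setOf_eq] at hi
      exact hi.2
    · intro x hx
      rcases hBs_sub hx with ⟨i, rfl⟩
      exact ⟨i, Finset.mem_filter.mpr ⟨Finset.mem_univ _, hx⟩, rfl⟩
  have hWT : W = Submodule.span (ZMod 2) (e '' ↑T) := by rw [himT]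
  have hBsli : LinearIndependent (ZMod 2) (Subtype.val : (B \ s : Set _) → _) :=
    (show LinearIndepOn (ZMod 2) id B from hBli).mono Set.diff_subset
  have hrankW : Module.finrank (ZMod 2) ↥W = (B \ s).toFinset.card := by
    rw [hW]; exact finrank_span_set_eq_card hBsli
  have hTcard' : T.card = (B \ s).toFinset.card := by
    have himg : T.image e = (B \ s).toFinset := by
      ext x
      simp only [Finset.mem_image, Set.mem_toFinset]
      constructor
      · rintro ⟨i, hi, rfl⟩
        have : e i ∈ e '' ↑T := ⟨i, hi, rfl⟩
        rwa [himT] at this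
      · intro hx
        rw [← himT] at hx
        rcases hx with ⟨i, hi, rfl⟩
        exact ⟨i, by exact_mod_cast hi, rfl⟩
    rw [← himg, Finset.card_image_of_injective _ he_inj]
  have hTcard : T.card = n - d := by
    rw [hTcard', ← hrankW]; omega
  set S : Finset (Fin n) := Tᶜ with hS
  have hScard : S.card = d := by
    rw [hS, Finset.card_compl, hTcard, Fintype.card_fin]
    omega
  -- the vanishing lemma
  have hvanish : ∀ v : V, (∀ i ∈ S, (v : Fin n → ZMod 2) i = 0) → v = 0 := by
    intro v hv
    have hvW : (v : Fin n → ZMod 2) ∈ W := by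
      rw [hWT]
      have h1 : (v : Fin n → ZMod 2) = ∑ i : Fin n, (v : Fin n → ZMod 2) i • e i := by
        funext j
        simp [e, Pi.single_apply]
      have hsum : ∑ i ∈ T, (v : Fin n → ZMod 2) i • e i
          = ∑ i : Fin n, (v : Fin n → ZMod 2) i • e i := by
        apply Finset.sum_subset (Finset.subset_univ T)
        intro i _ hiT
        have hiS : i ∈ S := Finset.mem_compl.mpr hiT
        rw [hv i hiS, zero_smul]
      have hrepr : (v : Fin n → ZMod 2) = ∑ i ∈ T, (v : Fin n → ZMod 2) i • e i :=
        h1.trans hsum.symm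
      rw [hrepr]
      exact Submodule.sum_mem _ (fun i hi => Submodule.smul_mem _ _
        (Submodule.subset_span ⟨i, hi, rfl⟩))
    have hz : (v : Fin n → ZMod 2) = 0 := Submodule.disjoint_def.mp hdisj _ v.2 hvW
    exact Subtype.ext hz
  let π : ↥V →ₗ[ZMod 2] (↥S → ZMod 2) :=
    { toFun := fun v i => (v : Fin n → ZMod 2) i
      map_add' := fun _ _ => rfl
      map_smul' := fun _ _ => rfl }
  have hπinj : Function.Injective ⇑π := by
    intro v w hvw
    have hsub : v - w = 0 := by
      apply hvanish
      intro i hi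
      have h := congrFun hvw ⟨i, hi⟩
      simp only [π, LinearMap.coe_mk, AddHom.coe_mk] at h
      simp [h]
    exact sub_eq_zero.mp hsub
  have hdim : Module.finrank (ZMod 2) ↥V = Module.finrank (ZMod 2) (↥S → ZMod 2) := by
    simp [hScard, ← hd]
  let ψ : ↥V ≃ₗ[ZMod 2] (↥S → ZMod 2) := π.linearEquivOfInjective hπinj hdim
  let eqv : Fin d ≃ ↥S := (Finset.equivFinOfCardEq hScard).symm
  let R0 : (Fin d → ZMod 2) →ₗ[ZMod 2] (↥S → ZMod 2) :=
    LinearMap.funLeft (ZMod 2) (ZMod 2) (fun i : ↥S => eqv.symm i)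
  let L : (Fin d → ZMod 2) →ₗ[ZMod 2] (Fin n → ZMod 2) :=
    V.subtype ∘ₗ (ψ.symm.toLinearMap ∘ₗ R0)
  let C : Matrix (Fin n) (Fin d) (ZMod 2) := LinearMap.toMatrix' L
  have hmv : ∀ x, C.mulVec x = L x := by
    intro x
    rw [← Matrix.toLin'_apply]
    rw [show Matrix.toLin' C = L from Matrix.toLin'_toMatrix' L]
  have hLinj : Function.Injective ⇑L := by
    simp only [L, LinearMap.coe_comp, LinearEquiv.coe_coe]
    exact Subtype.val_injective.comp (ψ.symm.injective.comp
      (LinearMap.funLeft_injective_of_surjective _ _ _ eqv.symm.surjective))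
  have hrangeL : Set.range ⇑L = (V : Set (Fin n → ZMod 2)) := by
    apply Set.Subset.antisymm
    · rintro _ ⟨y, rfl⟩
      exact (ψ.symm (R0 y)).2
    · rintro x hx
      refine ⟨fun j => ψ ⟨x, hx⟩ (eqv j), ?_⟩
      have hR : R0 (fun j => ψ ⟨x, hx⟩ (eqv j)) = ψ ⟨x, hx⟩ := by
        funext i
        simp [R0, LinearMap.funLeft_apply]
      simp [L, hR]
  have hc2 : ∀ (m : ℕ) (v : Fin m → ZMod 2), v + v = 0 := by
    intro m v; funext i; exact CharTwo.add_self_eq_zero _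
  have hAp : A.mulVec p = b := by
    have h := hp
    have : A.mulVec p + b + b = 0 + b := by rw [h]
    rwa [add_assoc, hc2 k b, add_zero, zero_add] at this
  have hmemV : ∀ x, x ∈ V ↔ A.mulVec x = 0 := fun x => by
    rw [hVdef]; simp [LinearMap.mem_ker]
  have hrange2 : Set.range (fun x => C.mulVec x + p) = {x | A.mulVec x + b = 0} := by
    ext x
    simp only [Set.mem_range, Set.mem_setOf_eq]
    constructor
    · rintro ⟨y, rfl⟩
      have hLy : L y ∈ V := by
        rw [← SetLike.mem_coe, ← hrangeL]; exact ⟨y, rfl⟩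
      rw [hmv, Matrix.mulVec_add, (hmemV _).mp hLy, hAp, zero_add, hc2]
    · intro hx
      have hx' : x + p ∈ V := by
        rw [hmemV, Matrix.mulVec_add, hAp]
        exact hx
      have : x + p ∈ Set.range ⇑L := by rw [hrangeL]; exact hx'
      obtain ⟨y, hy⟩ := this
      refine ⟨y, ?_⟩
      rw [hmv, hy, add_assoc, hc2, add_zero]
  have hcol : ∀ (j : Fin d) (i : Fin n), C i j ≠ 0 → i ∈ T ∨ i = ↑(eqv j) := by
    intro j i hC
    by_contra hcon
    push_neg at hcon
    obtain ⟨hiT, hine⟩ := hcon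
    have hiS : i ∈ S := Finset.mem_compl.mpr hiT
    apply hC
    set u : ↥S → ZMod 2 := fun i' => if i' = eqv j then 1 else 0 with hu
    have h2 : R0 (fun j' => if j' = j then 1 else 0) = u := by
      funext i'
      simp only [R0, LinearMap.funLeft_apply, hu]
      by_cases h : i' = eqv j
      · simp [h]
      · have : eqv.symm i' ≠ j := fun hE => h (by rw [← hE, Equiv.apply_symm_apply])
        simp [h, this]
    have h1 : C i j = L (fun j' => if j' = j then 1 else 0) i :=
      by
        show LinearMap.toMatrix' L i j = _
        rw [LinearMap.toMatrix'_apply]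
        have hsj : (Pi.single j 1 : Fin d → ZMod 2) = fun j' => if j' = j then 1 else 0 := by
          ext j'; simp [Pi.single_apply]
        rw [hsj]
    have h3 : C i j = (ψ.symm u : Fin n → ZMod 2) i := by
      rw [h1]
      simp [L, h2]
    have h4 : π (ψ.symm u) = u := by
      have h := ψ.apply_symm_apply u
      rwa [show ∀ z, ψ z = π z from fun z =>
        LinearMap.linearEquivOfInjective_apply hπinj hdim z] at h
    have h5 : (ψ.symm u : Fin n → ZMod 2) i = u ⟨i, hiS⟩ := congrFun h4 ⟨i, hiS⟩
    rw [h3, h5, hu]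
    have : (⟨i, hiS⟩ : ↥S) ≠ eqv j := fun hE => hine (by rw [← hE])
    simp [this]
  refine ⟨C, p, ?_, hrange2, ?_⟩
  · intro x y hxy
    apply hLinj
    simp only at hxy
    rw [hmv, hmv] at hxy
    exact add_right_cancel hxy
  · intro j
    have hsubset : (Finset.univ.filter fun i => C i j ≠ 0) ⊆ insert (↑(eqv j)) T := by
      intro i hi
      simp only [Finset.mem_filter] at hi
      rcases hcol j i hi.2 with h | h
      · exact Finset.mem_insert_of_mem h
      · exact h ▸ Finset.mem_insert_self _ _
    calc (Finset.univ.filter fun i => C i j ≠ 0).card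
        ≤ (insert (↑(eqv j)) T).card := Finset.card_le_card hsubset
      _ ≤ T.card + 1 := Finset.card_insert_le _ _
      _ = n - d + 1 := by rw [hTcard]
end

section
/- For all natural numbers n, k, p with n ≥ k and c ≥ 2 an integer, setting δ = k - c ≥ 0: (2^{-(n-δ)})^k · ∏_{i=0}^{δ-1} (2ⁿ - 2ⁱ)/(2^δ - 2ⁱ) ≤ 4·(2^{-(n-k+c)})^c. -/
open Finset

private lemma weier (m : ℕ) (a : ℕ → ℝ) (h0 : ∀ j, 0 ≤ a j) (h1 : ∀ j, a j ≤ 1) :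
    1 - ∑ j ∈ range m, a j ≤ ∏ j ∈ range m, (1 - a j) := by
  induction m with
  | zero => simp
  | succ m ih =>
    rw [Finset.sum_range_succ, Finset.prod_range_succ]
    have hp : (0:ℝ) ≤ ∏ j ∈ range m, (1 - a j) :=
      Finset.prod_nonneg fun j _ => by linarith [h1 j]
    have hs : (0:ℝ) ≤ ∑ j ∈ range m, a j := Finset.sum_nonneg fun j _ => h0 j
    nlinarith [h0 m, h1 m, ih, mul_le_mul_of_nonneg_right ih (by linarith [h1 m] : (0:ℝ) ≤ 1 - a m)]

private lemma prod_quarter (δ : ℕ) :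
    (1:ℝ)/4 ≤ ∏ i ∈ range δ, ((2:ℝ)^δ - 2^i) / 2^δ := by
  have key : ∏ i ∈ range δ, ((2:ℝ)^δ - 2^i) / 2^δ
      = ∏ i ∈ range δ, (1 - (2:ℝ)⁻¹ ^ (i+1)) := by
    rw [← Finset.prod_range_reflect]
    apply Finset.prod_congr rfl
    intro i hi
    have hi' : i < δ := Finset.mem_range.mp hi
    have e : (2:ℝ)^(δ - 1 - i) / 2^δ = (2:ℝ)⁻¹ ^ (i+1) := by
      have h2 : δ = (δ - 1 - i) + (i+1) := by omega
      rw [inv_pow]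
      calc (2:ℝ)^(δ-1-i) / 2^δ = 2^(δ-1-i) / (2^(δ-1-i) * 2^(i+1)) := by
            rw [← pow_add, ← h2]
      _ = ((2:ℝ)^(i+1))⁻¹ := div_mul_cancel_left₀ (by positivity) _
    rw [sub_div, div_self (by positivity : (2:ℝ)^δ ≠ 0), e]
  rw [key]
  rcases δ with _ | m
  · norm_num
  · rw [Finset.prod_range_succ']
    have hb : 1 - ∑ j ∈ range m, (2:ℝ)⁻¹^(j+2) ≤ ∏ j ∈ range m, (1 - (2:ℝ)⁻¹^(j+2)) :=
      weier m (fun j => (2:ℝ)⁻¹^(j+2)) (fun j => by positivity)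
        (fun j => by
          have : (2:ℝ)⁻¹^(j+2) ≤ (2:ℝ)⁻¹^0 :=
            pow_le_pow_of_le_one (by norm_num) (by norm_num) (by omega)
          simpa using this)
    have hs : ∑ j ∈ range m, (2:ℝ)⁻¹^(j+2) ≤ 1/2 := by
      have e : ∑ j ∈ range m, (2:ℝ)⁻¹^(j+2) = (1/4) * ∑ j ∈ range m, (2:ℝ)⁻¹^j := by
        rw [Finset.mul_sum]
        exact Finset.sum_congr rfl fun j _ => by rw [pow_add]; ring
      have hgeom : ∑ j ∈ range m, (2:ℝ)⁻¹^j ≤ 2 := by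
        rw [geom_sum_eq (by norm_num : (2:ℝ)⁻¹ ≠ 1) m,
          div_le_iff_of_neg (by norm_num : (2:ℝ)⁻¹ - 1 < 0)]
        nlinarith [pow_nonneg (by norm_num : (0:ℝ) ≤ 2⁻¹) m]
      rw [e]; linarith
    calc (1:ℝ)/4 = (1 - 1/2) * (1 - (2:ℝ)⁻¹^(0+1)) := by norm_num
    _ ≤ (∏ j ∈ range m, (1 - (2:ℝ)⁻¹^(j+1+1))) * (1 - (2:ℝ)⁻¹^(0+1)) := by
        apply mul_le_mul_of_nonneg_right _ (by norm_num)
        calc (1:ℝ) - 1/2 ≤ 1 - ∑ j ∈ range m, (2:ℝ)⁻¹^(j+2) := by linarith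
        _ ≤ _ := by simpa using hb

theorem subspace_union_bound_estimate (n k c : ℕ) (hkn : k ≤ n) (hc : 2 ≤ c)
    (hck : c ≤ k) :
    ((2 : ℝ) ^ (-((n : ℝ) - (k - c : ℕ)))) ^ k *
        ∏ i ∈ Finset.range (k - c),
          ((2 ^ n - 2 ^ i : ℝ) / (2 ^ (k - c : ℕ) - 2 ^ i : ℝ)) ≤
      4 * ((2 : ℝ) ^ (-((n : ℝ) - k + c))) ^ c := by
  set δ := k - c with hδ
  have hδn : δ ≤ n := le_trans (Nat.sub_le _ _) hkn
  set D := n - δ with hD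
  have hkdc : k = δ + c := by omega
  -- rewrite rpow exponents
  have e0 : ((δ : ℕ) : ℝ) = (k:ℝ) - (c:ℝ) := by
    rw [hδ]; push_cast [Nat.cast_sub hck]; ring
  have eD : ((D : ℕ) : ℝ) = (n:ℝ) - (δ:ℕ) := by
    rw [hD]; push_cast [Nat.cast_sub hδn]; ring
  have e1 : (2 : ℝ) ^ (-((n : ℝ) - (δ : ℕ))) = ((2:ℝ)^D)⁻¹ := by
    rw [← eD, Real.rpow_neg (by norm_num), Real.rpow_natCast]
  have e2 : (2 : ℝ) ^ (-((n : ℝ) - k + c)) = ((2:ℝ)^D)⁻¹ := by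
    rw [← e1]
    congr 1
    rw [e0]; ring
  rw [e1, e2]
  -- bound the product
  have hprod : ∏ i ∈ Finset.range δ, ((2 ^ n - 2 ^ i : ℝ) / (2 ^ δ - 2 ^ i : ℝ))
      ≤ 2 ^ (D * δ) * 4 := by
    have step1 : ∏ i ∈ Finset.range δ, ((2 ^ n - 2 ^ i : ℝ) / (2 ^ δ - 2 ^ i : ℝ))
        ≤ ∏ i ∈ Finset.range δ, ((2:ℝ)^D * (2 ^ δ / (2 ^ δ - 2 ^ i : ℝ))) := by
      apply Finset.prod_le_prod
      · intro i hi
        have hi' : i < δ := Finset.mem_range.mp hi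
        have hnum : (2:ℝ)^i ≤ 2^n := pow_le_pow_right₀ (by norm_num) (by omega)
        have hden : (0:ℝ) < 2^δ - 2^i := by
          have : (2:ℝ)^i < 2^δ := pow_lt_pow_right₀ (by norm_num) hi'
          linarith
        have hnum' : (0:ℝ) ≤ 2^n - 2^i := by linarith
        exact div_nonneg hnum' (le_of_lt hden)
      · intro i hi
        have hi' : i < δ := Finset.mem_range.mp hi
        have hden : (0:ℝ) < 2^δ - 2^i := by
          have : (2:ℝ)^i < 2^δ := pow_lt_pow_right₀ (by norm_num) hi'
          linarith
        rw [mul_div_assoc', div_le_div_iff₀ hden hden]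
        apply mul_le_mul_of_nonneg_right _ (le_of_lt hden)
        have h2n : (2:ℝ)^D * 2^δ = 2^n := by
          rw [← pow_add]; congr 1; omega
        rw [h2n]
        have : (0:ℝ) ≤ 2^i := by positivity
        linarith
    have step2 : ∏ i ∈ Finset.range δ, ((2:ℝ)^D * (2 ^ δ / (2 ^ δ - 2 ^ i : ℝ)))
        = 2^(D*δ) * ∏ i ∈ Finset.range δ, ((2:ℝ) ^ δ / (2 ^ δ - 2 ^ i : ℝ)) := by
      rw [Finset.prod_mul_distrib, Finset.prod_const, Finset.card_range, ← pow_mul]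
    have step3 : ∏ i ∈ Finset.range δ, ((2:ℝ) ^ δ / (2 ^ δ - 2 ^ i : ℝ)) ≤ 4 := by
      have hq := prod_quarter δ
      have hinv : ∏ i ∈ Finset.range δ, ((2:ℝ) ^ δ / (2 ^ δ - 2 ^ i : ℝ))
          = (∏ i ∈ Finset.range δ, (((2:ℝ)^δ - 2^i) / 2^δ))⁻¹ := by
        rw [← Finset.prod_inv_distrib]
        exact Finset.prod_congr rfl fun i _ => by rw [inv_div]
      rw [hinv]
      have hpos : (0:ℝ) < ∏ i ∈ Finset.range δ, (((2:ℝ)^δ - 2^i) / 2^δ) := by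
        linarith
      rw [inv_le_comm₀ hpos (by norm_num)]
      linarith
    calc _ ≤ _ := step1
    _ = _ := step2
    _ ≤ 2^(D*δ) * 4 := by
        apply mul_le_mul_of_nonneg_left step3 (by positivity)
  have hpowpos : (0:ℝ) < ((2:ℝ)^D)⁻¹ ^ k := by positivity
  calc ((2:ℝ)^D)⁻¹ ^ k * ∏ i ∈ Finset.range δ, ((2 ^ n - 2 ^ i : ℝ) / (2 ^ δ - 2 ^ i : ℝ))
      ≤ ((2:ℝ)^D)⁻¹ ^ k * (2 ^ (D * δ) * 4) :=
        mul_le_mul_of_nonneg_left hprod (le_of_lt hpowpos)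
  _ = 4 * ((2:ℝ)^D)⁻¹ ^ c := by
      rw [hkdc]
      rw [pow_add, pow_mul]
      rw [inv_pow ((2:ℝ)^D) δ, inv_pow ((2:ℝ)^D) c]
      have h2 : ((2:ℝ)^D)^δ ≠ 0 := by positivity
      field_simp
  _ ≤ _ := le_refl _
end

section
/- Let β_0 = 1 and for j ≥ 1 let β_j = 2^{-(k_1+...+k_j)/2}·(1 - 2·2^{-k_j}) + 2^{-k_j/2}·(2 - 2·2^{-k_j})·β_{j-1}, with k_j = (x+1)·j for a fixed integer x ≥ 1 and n = (x+1)m(m+1)/2. Then β_m ≥ (2 - 2^{-m})·(1 - 2^{-x} - 2^{-2x})·2^m·2^{-n/2}. -/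
private noncomputable def Dseq (q : ℝ) : ℕ → ℝ
  | 0 => 1
  | (j+1) => (1 - q^(j+1)) * ((1/2:ℝ)^(j+1) + Dseq q j)

private lemma Dseq_zero (q : ℝ) : Dseq q 0 = 1 := rfl

private lemma Dseq_succ (q : ℝ) (j : ℕ) :
    Dseq q (j+1) = (1 - q^(j+1)) * ((1/2:ℝ)^(j+1) + Dseq q j) := rfl

private lemma Dseq_nonneg (q : ℝ) (hq0 : 0 ≤ q) (hq1 : q ≤ 1) : ∀ j, 0 ≤ Dseq q j := by
  intro j
  induction j with
  | zero => norm_num [Dseq_zero]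
  | succ j ih =>
    rw [Dseq_succ]
    have h1 : q^(j+1) ≤ 1 := pow_le_one₀ hq0 hq1
    have h2 : (0:ℝ) ≤ (1/2:ℝ)^(j+1) := by positivity
    nlinarith

private lemma prod_pentagonal (q : ℝ) (hq0 : 0 ≤ q) (hq : q ≤ 1/2) :
    ∀ k, 1 - q - q^2 ≤ ∏ i ∈ Finset.Icc 1 k, (1 - q^i) := by
  have hq1 : q ≤ 1 := hq.trans (by norm_num)
  have aux : ∀ k, 1 ≤ k → 1 - q - q^2 + q^(k+1) ≤ ∏ i ∈ Finset.Icc 1 k, (1 - q^i) := by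
    intro k hk
    induction k with
    | zero => omega
    | succ k ih =>
      rcases Nat.eq_or_lt_of_le hk with h1 | h1
      · have hk0 : k = 0 := by omega
        subst hk0
        simp only [Finset.Icc_self, Finset.prod_singleton, pow_one]
        have e : q^(0+1+1) = q^2 := by ring
        linarith
      · have hk1 : 1 ≤ k := by omega
        have hstep := ih hk1
        rw [Finset.prod_Icc_succ_top (by omega)]
        have hf : 0 ≤ 1 - q^(k+1) := by
          have := pow_le_one₀ hq0 hq1 (n := k+1); linarith
        have h2 : q^(k+1) ≤ q^2 := pow_le_pow_of_le_one hq0 hq1 (by omega)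
        have h3 : 0 ≤ q^(k+1) := pow_nonneg hq0 _
        calc 1 - q - q^2 + q^(k+1+1)
            ≤ (1 - q - q^2 + q^(k+1)) * (1 - q^(k+1)) := by
              have e : q^(k+1+1) = q^(k+1) * q := by ring
              nlinarith [sq_nonneg (q^(k+1))]
          _ ≤ (∏ i ∈ Finset.Icc 1 k, (1 - q^i)) * (1 - q^(k+1)) :=
              mul_le_mul_of_nonneg_right hstep hf
  intro k
  rcases Nat.eq_zero_or_pos k with rfl | hk
  · simp; nlinarith [sq_nonneg q]
  · have h4 := aux k hk
    have h3 : 0 ≤ q^(k+1) := pow_nonneg hq0 _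
    linarith

private lemma Pprod_nonneg (q : ℝ) (hq0 : 0 ≤ q) (hq1 : q ≤ 1) (k : ℕ) :
    0 ≤ ∏ i ∈ Finset.Icc 1 k, (1 - q^i) := by
  apply Finset.prod_nonneg
  intro i _
  have : q^i ≤ 1 := pow_le_one₀ hq0 hq1
  linarith

private lemma Pprod_le_one (q : ℝ) (hq0 : 0 ≤ q) (hq1 : q ≤ 1) (k : ℕ) :
    ∏ i ∈ Finset.Icc 1 k, (1 - q^i) ≤ 1 := by
  apply Finset.prod_le_one
  · intro i _
    have : q^i ≤ 1 := pow_le_one₀ hq0 hq1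
    linarith
  · intro i _
    have : (0:ℝ) ≤ q^i := pow_nonneg hq0 i
    linarith

private lemma Dseq_ge (q : ℝ) (hq0 : 0 ≤ q) (hq1 : q ≤ 1) :
    ∀ k, (∏ i ∈ Finset.Icc 1 k, (1 - q^i)) * (2 - (1/2:ℝ)^k) ≤ Dseq q k := by
  intro k
  induction k with
  | zero => simp [Dseq_zero]; norm_num
  | succ k ih =>
    rw [Dseq_succ]
    have hPk1 : ∏ i ∈ Finset.Icc 1 (k+1), (1 - q^i)
        = (∏ i ∈ Finset.Icc 1 k, (1 - q^i)) * (1 - q^(k+1)) :=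
      Finset.prod_Icc_succ_top (by omega) _
    have hf : 0 ≤ 1 - q^(k+1) := by
      have := pow_le_one₀ hq0 hq1 (n := k+1); linarith
    have hhk : ((1:ℝ)/2)^(k+1) = (1/2:ℝ)^k * (1/2) := by rw [pow_succ]
    have hh0 : (0:ℝ) ≤ (1/2:ℝ)^k := by positivity
    have hh1 : ((1:ℝ)/2)^k ≤ 1 := pow_le_one₀ (by norm_num) (by norm_num)
    have hP1 := Pprod_le_one q hq0 hq1 k
    have hP0 := Pprod_nonneg q hq0 hq1 k
    rw [hPk1, hhk]
    nlinarith [mul_le_mul_of_nonneg_left ih hf,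
      mul_nonneg (mul_nonneg hf hh0) (sub_nonneg.mpr hP1)]

set_option maxHeartbeats 1000000 in
theorem tree_amplitude_lower_bound (x m n : ℕ) (hx : 1 ≤ x)
    (hn : n = (x + 1) * m * (m + 1) / 2)
    (β : ℕ → ℝ) (hβ0 : β 0 = 1)
    (hβrec : ∀ j, 1 ≤ j →
      β j = (2 : ℝ) ^ (-((∑ i ∈ Finset.Icc 1 j, (x + 1) * i : ℕ) : ℝ) / 2) *
              (1 - 2 * (2 : ℝ) ^ (-(((x + 1) * j : ℕ) : ℝ))) +
            (2 : ℝ) ^ (-(((x + 1) * j : ℕ) : ℝ) / 2) *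
              (2 - 2 * (2 : ℝ) ^ (-(((x + 1) * j : ℕ) : ℝ))) * β (j - 1)) :
    β m ≥ (2 - (2 : ℝ) ^ (-(m : ℝ))) *
        (1 - (2 : ℝ) ^ (-(x : ℝ)) - (2 : ℝ) ^ (-(2 * (x : ℝ)))) *
        2 ^ m * (2 : ℝ) ^ (-(n : ℝ) / 2) := by
  set q : ℝ := (1/2 : ℝ) ^ x with hqdef
  have hq0 : (0:ℝ) ≤ q := by positivity
  have hq : q ≤ 1/2 := by
    calc q ≤ (1/2:ℝ)^1 := pow_le_pow_of_le_one (by norm_num) (by norm_num) hx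
    _ = 1/2 := pow_one _
  have hq1 : q ≤ 1 := hq.trans (by norm_num)
  have hDnn := Dseq_nonneg q hq0 hq1
  set Sr : ℕ → ℝ := fun j => ((∑ i ∈ Finset.Icc 1 j, (x + 1) * i : ℕ) : ℝ) with hSr
  set R : ℕ → ℝ := fun j => (2:ℝ) ^ (-(Sr j) / 2) with hR
  have hRpos : ∀ j, 0 < R j := fun j => Real.rpow_pos_of_pos (by norm_num) _
  -- main induction
  have main : ∀ j, Dseq q j * 2^j * R j ≤ β j := by
    intro j
    induction j with
    | zero =>
      have h0 : Sr 0 = 0 := by simp [hSr]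
      rw [hβ0, Dseq_zero, hR]
      simp only [h0]
      norm_num
    | succ j ih =>
      have hrec := hβrec (j+1) (by omega)
      simp only [Nat.add_sub_cancel] at hrec
      set k := (x+1)*(j+1) with hk
      set t : ℝ := (2:ℝ) ^ (-((k:ℕ):ℝ)) with ht
      set r : ℝ := (2:ℝ) ^ (-((k:ℕ):ℝ)/2) with hr
      have hSsucc : Sr (j+1) = Sr j + (k:ℝ) := by
        rw [hSr]
        simp only
        rw [Finset.sum_Icc_succ_top (by omega), hk]
        push_cast; ring
      have hRsucc : R (j+1) = R j * r := by
        rw [hR]; simp only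
        rw [hSsucc, hr, ← Real.rpow_add (by norm_num)]
        ring_nf
      have hreceq : β (j+1) = R (j+1) * (1 - 2*t) + r * (2 - 2*t) * β j := by
        rw [hrec]
      have ht' : t = q^(j+1) * (1/2:ℝ)^(j+1) := by
        rw [ht, hqdef]
        rw [Real.rpow_neg (by norm_num), Real.rpow_natCast]
        rw [← pow_mul, ← pow_add]
        rw [show x*(j+1) + (j+1) = (x+1)*(j+1) by ring]
        rw [← hk, one_div, inv_pow]
      have htpos : 0 < t := Real.rpow_pos_of_pos (by norm_num) _
      have hrpos : 0 < r := Real.rpow_pos_of_pos (by norm_num) _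
      have hh2 : ((1:ℝ)/2)^(j+1) ≤ 1/2 := by
        calc ((1:ℝ)/2)^(j+1) ≤ ((1:ℝ)/2)^1 :=
          pow_le_pow_of_le_one (by norm_num) (by norm_num) (by omega)
        _ = 1/2 := pow_one _
      have ht1 : t ≤ 1/2 := by
        rw [ht']
        have hc1 : q^(j+1) ≤ 1 := pow_le_one₀ hq0 hq1
        have hh0 : (0:ℝ) ≤ (1/2:ℝ)^(j+1) := by positivity
        nlinarith
      have step2 : R (j+1) * (1 - 2*t) + r * (2 - 2*t) * (Dseq q j * 2^j * R j) ≤ β (j+1) := by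
        rw [hreceq]
        have hB : 0 ≤ r * (2 - 2*t) := by nlinarith
        nlinarith [mul_le_mul_of_nonneg_left ih hB]
      refine le_trans ?_ step2
      have hkey : Dseq q (j+1) * 2^(j+1) ≤ (1 - 2*t) + (2 - 2*t) * (Dseq q j * 2^j) := by
        rw [Dseq_succ]
        have hhinv : ((1:ℝ)/2)^(j+1) * 2^(j+1) = 1 := by
          rw [← mul_pow]; norm_num
        have hc0 : (0:ℝ) ≤ q^(j+1) := pow_nonneg hq0 _
        have hh0 : (0:ℝ) ≤ (1/2:ℝ)^(j+1) := by positivity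
        have hu : (0:ℝ) ≤ Dseq q j * 2^j := by
          have := hDnn j; positivity
        have hexp : (1 - q^(j+1)) * ((1/2:ℝ)^(j+1) + Dseq q j) * 2^(j+1)
            = (1 - q^(j+1)) * (1 + 2 * (Dseq q j * 2^j)) := by
          have h2 : (2:ℝ)^(j+1) = 2^j * 2 := by ring
          linear_combination (1 - q^(j+1)) * hhinv + (1 - q^(j+1)) * Dseq q j * h2
        rw [hexp, ht']
        have hA : 0 ≤ q^(j+1) * (1 - 2*(1/2:ℝ)^(j+1)) :=
          mul_nonneg hc0 (by linarith)
        have hB : 0 ≤ (Dseq q j * 2^j) * (q^(j+1) * (1 - (1/2:ℝ)^(j+1))) :=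
          mul_nonneg hu (mul_nonneg hc0 (by linarith))
        nlinarith [hA, hB]
      calc Dseq q (j+1) * 2^(j+1) * R (j+1)
          ≤ ((1 - 2*t) + (2 - 2*t) * (Dseq q j * 2^j)) * R (j+1) :=
            mul_le_mul_of_nonneg_right hkey (hRpos _).le
        _ = R (j+1) * (1 - 2*t) + r * (2 - 2*t) * (Dseq q j * 2^j * R j) := by
            rw [hRsucc]; ring
  -- n equals the sum
  have hsum : ∀ j : ℕ, 2 * (∑ i ∈ Finset.Icc 1 j, (x + 1) * i) = (x+1)*j*(j+1) := by
    intro j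
    induction j with
    | zero => simp
    | succ j ih =>
      rw [Finset.sum_Icc_succ_top (by omega), Nat.mul_add, ih]
      ring
  have hnsum : (n:ℝ) = Sr m := by
    rw [hSr]
    have e : n = ∑ i ∈ Finset.Icc 1 m, (x + 1) * i := by
      have := hsum m; omega
    rw [e]
  -- final assembly
  have hβm := main m
  have hDm := Dseq_ge q hq0 hq1 m
  have hPm : 1 - q - q^2 ≤ ∏ i ∈ Finset.Icc 1 m, (1 - q^i) := prod_pentagonal q hq0 hq m
  have hhm : (2:ℝ) ^ (-(m:ℝ)) = (1/2:ℝ)^m := by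
    rw [Real.rpow_neg (by norm_num), Real.rpow_natCast, ← inv_pow]
    norm_num
  have hqx : (2:ℝ) ^ (-(x:ℝ)) = q := by
    rw [hqdef, Real.rpow_neg (by norm_num), Real.rpow_natCast, ← inv_pow]
    norm_num
  have hq2x : (2:ℝ) ^ (-(2*(x:ℝ))) = q^2 := by
    rw [hqdef, show -(2*(x:ℝ)) = -(((2*x:ℕ)):ℝ) by push_cast; ring,
      Real.rpow_neg (by norm_num), Real.rpow_natCast, ← inv_pow, ← pow_mul]
    norm_num
    ring_nf
  have hRn : (2:ℝ) ^ (-(n:ℝ)/2) = R m := by rw [hR]; simp only; rw [hnsum]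
  rw [ge_iff_le, hhm, hqx, hq2x, hRn]
  have hhm0 : (0:ℝ) ≤ (1/2:ℝ)^m := by positivity
  have hhm1 : ((1:ℝ)/2)^m ≤ 1 := pow_le_one₀ (by norm_num) (by norm_num)
  have h2m : (0:ℝ) ≤ (2:ℝ)^m := by positivity
  have hchain : (2 - (1/2:ℝ)^m) * (1 - q - q^2) ≤ Dseq q m := by
    nlinarith [Pprod_nonneg q hq0 hq1 m,
      mul_le_mul_of_nonneg_right hPm (show (0:ℝ) ≤ 2 - (1/2:ℝ)^m by linarith)]
  calc (2 - (1/2:ℝ)^m) * (1 - q - q^2) * 2^m * R m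
      ≤ Dseq q m * 2^m * R m := by
        have h5 := mul_le_mul_of_nonneg_right hchain h2m
        exact mul_le_mul_of_nonneg_right h5 (hRpos m).le
    _ ≤ β m := hβm
end
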